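/- arXiv:math/9706205 — 2 statements merged into one kernel-verified Lean document; each statement's English description precedes it below -/
import Mathlib

section
/- ω₁ does not have the tree property: there exists an Aronszajn ω₁-tree, i.e., a tree of height ω₁ with all levels countable and no uncountable branch. -/
open Cardinal Ordinal

universe u

/-- A partial order `T` with a level function `lev` is a (set-theoretic) tree. -/
structure IsLeveledTree (T : Type u) [PartialOrder T] (lev : T → Ordinal.{u}) : Prop where
  lev_strictMono : ∀ {s t : T}, s < t → lev s < lev t
  pred_chain : ∀ t s₁ s₂ : T, s₁ < t → s₂ < t → s₁ ≤ s₂ ∨ s₂ ≤ s₁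
  pred_full : ∀ t : T, ∀ α, α < lev t → ∃ s, s < t ∧ lev s = α

/-- `T` is a tree of height `δ` with all levels of size `< δ`. -/
structure IsDeltaTree (δ : Cardinal.{u}) (T : Type u) [PartialOrder T] (lev : T → Ordinal.{u})
    extends IsLeveledTree T lev : Prop where
  lev_lt : ∀ t, lev t < δ.ord
  levels_nonempty : ∀ α < δ.ord, ∃ t, lev t = α
  levels_small : ∀ α, #{t : T // lev t = α} < δ

/-- A branch of length `δ`: a chain meeting every level below `δ`. -/
def HasCofinalBranch (δ : Cardinal.{u}) (T : Type u) [PartialOrder T] (lev : T → Ordinal.{u}) : Prop :=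
  ∃ B : Set T, IsChain (· ≤ ·) B ∧ ∀ α < δ.ord, ∃ t ∈ B, lev t = α

/-- The tree property at δ. -/
def HasTreeProp (δ : Cardinal.{0}) : Prop :=
  ∀ (T : Type 0) (_ : PartialOrder T) (lev : T → Ordinal.{0}),
    IsDeltaTree δ T lev → HasCofinalBranch δ T lev

section AronszajnConstruction
open Set

def ASupp (α : Ordinal.{0}) (f : Ordinal.{0} → ℕ) : Prop := ∀ γ, ¬ γ < α → f γ = 0
def AGood (α : Ordinal.{0}) (f : Ordinal.{0} → ℕ) : Prop :=
  Set.InjOn f (Set.Iio α) ∧ (f '' Set.Iio α)ᶜ.Infinite ∧ ASupp α f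
def ACoh (β : Ordinal.{0}) (f g : Ordinal.{0} → ℕ) : Prop := {γ | γ < β ∧ f γ ≠ g γ}.Finite

lemma ACoh.mono {β β' f g} (h : β' ≤ β) (hc : ACoh β f g) : ACoh β' f g :=
  hc.subset fun γ ⟨h1, h2⟩ => ⟨lt_of_lt_of_le h1 h, h2⟩

lemma ACoh.symm {β f g} (hc : ACoh β f g) : ACoh β g f :=
  hc.subset fun γ ⟨h1, h2⟩ => ⟨h1, Ne.symm h2⟩

lemma ACoh.trans {β f g h} (h1 : ACoh β f g) (h2 : ACoh β g h) : ACoh β f h :=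
  (h1.union h2).subset fun γ ⟨hγ, hne⟩ => by
    by_cases he : f γ = g γ
    · exact Or.inr ⟨hγ, fun e => hne (he.trans e)⟩
    · exact Or.inl ⟨hγ, he⟩


lemma AGood_zero : AGood 0 (fun _ => 0) := by
  refine ⟨fun a ha => absurd ha (by simp), ?_, fun γ _ => rfl⟩
  rw [show Set.Iio (0:Ordinal) = ∅ by ext x; simp [not_lt_zero]]
  rw [Set.image_empty]
  simpa using Set.infinite_univ

lemma AGood_succ (β : Ordinal.{0}) (f : Ordinal.{0} → ℕ) (hf : AGood β f) :
    ∃ f', AGood (Order.succ β) f' ∧ (∀ γ, γ < β → f' γ = f γ) := by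
  obtain ⟨n, hn⟩ := hf.2.1.nonempty
  classical
  refine ⟨fun γ => if γ = β then n else f γ, ?_, fun γ hγ => if_neg hγ.ne⟩
  have himg : (fun γ => if γ = β then n else f γ) '' Set.Iio (Order.succ β)
      = insert n (f '' Set.Iio β) := by
    ext m
    constructor
    · rintro ⟨γ, hγ, rfl⟩
      rw [Set.mem_Iio, Order.lt_succ_iff] at hγ
      rcases eq_or_lt_of_le hγ with rfl | h
      · simp
      · right
        refine ⟨γ, h, ?_⟩
        show f γ = (if γ = β then n else f γ)
        rw [if_neg h.ne]
    · rintro (rfl | ⟨γ, hγ, rfl⟩)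
      · exact ⟨β, Order.lt_succ β, by simp⟩
      · refine ⟨γ, hγ.trans (Order.lt_succ β), ?_⟩
        show (if γ = β then n else f γ) = f γ
        rw [if_neg hγ.ne]
  refine ⟨?_, ?_, ?_⟩
  · intro γ₁ h₁ γ₂ h₂ he
    simp only [Set.mem_Iio, Order.lt_succ_iff] at h₁ h₂
    simp only at he
    rcases eq_or_lt_of_le h₁ with rfl | h₁' <;> rcases eq_or_lt_of_le h₂ with he2 | h₂'
    · exact he2.symm
    · rw [if_pos rfl, if_neg h₂'.ne] at he; exact absurd ⟨γ₂, h₂', he.symm⟩ hn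
    · subst he2; rw [if_neg h₁'.ne, if_pos rfl] at he; exact absurd ⟨γ₁, h₁', he⟩ hn
    · rw [if_neg h₁'.ne, if_neg h₂'.ne] at he; exact hf.1 h₁' h₂' he
  · rw [himg]
    refine ((hf.2.1.diff (Set.finite_singleton n)).mono ?_)
    intro x hx; simp at hx ⊢; tauto
  · intro γ hγ
    show (if γ = β then n else f γ) = 0
    rw [if_neg, hf.2.2 γ]
    · exact fun h => hγ (h.trans (Order.lt_succ β))
    · exact fun h => hγ (h ▸ Order.lt_succ β)

lemma AStep (β β' : Ordinal.{0}) (hββ' : β < β') (eb : Ordinal.{0} → ℕ)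
    (hebinj : Set.InjOn eb (Set.Iio β')) (A R : Set ℕ)
    (hAR : Disjoint A R) (hRinf : R.Infinite)
    (hA : (A ∩ eb '' Set.Iio β').Finite) (hR : (R ∩ eb '' Set.Iio β').Finite)
    (f : Ordinal.{0} → ℕ) (hinj : Set.InjOn f (Set.Iio β)) (hsupp : ASupp β f)
    (hcoh : ACoh β f eb) (hdisj : (f '' Set.Iio β) ∩ A = ∅) :
    ∃ f', Set.InjOn f' (Set.Iio β') ∧ ASupp β' f' ∧ ACoh β' f' eb ∧
      (f' '' Set.Iio β') ∩ A = ∅ ∧ ∀ γ, γ < β → f' γ = f γ := by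
  classical
  set Dif : Set Ordinal.{0} := {γ | γ < β ∧ f γ ≠ eb γ} with hDif
  have hDiffin : Dif.Finite := hcoh
  -- f-image decomposition
  have hfimg : f '' Set.Iio β ⊆ eb '' Set.Iio β ∪ f '' Dif := by
    rintro x ⟨δ, hδ, rfl⟩
    by_cases h : f δ = eb δ
    · exact Or.inl ⟨δ, hδ, h.symm⟩
    · exact Or.inr ⟨δ, ⟨hδ, h⟩, rfl⟩
  set S : Set Ordinal.{0} := {γ | ¬ γ < β ∧ γ < β' ∧ eb γ ∈ f '' Set.Iio β ∪ A} with hS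
  have hSfin : S.Finite := by
    have himg : eb '' S ⊆ (f '' Dif) ∪ (A ∩ eb '' Set.Iio β') := by
      rintro x ⟨γ, ⟨hγβ, hγβ', hmem⟩, rfl⟩
      rcases hmem with hmem | hmem
      · rcases hfimg hmem with ⟨δ, hδ, hδe⟩ | h2
        · have hde : δ = γ := hebinj (hδ.trans hββ') hγβ' hδe
          subst hde
          exact absurd hδ hγβ
        · exact Or.inl h2
      · exact Or.inr ⟨hmem, ⟨γ, hγβ', rfl⟩⟩
    have : (eb '' S).Finite := ((hDiffin.image f).union hA).subset himg
    exact Set.Finite.of_finite_image this (hebinj.mono (fun γ hγ => hγ.2.1))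
  set W : Set ℕ := R \ (f '' Set.Iio β ∪ eb '' Set.Iio β') with hW
  have hWinf : W.Infinite := by
    have h1 : (R ∩ (f '' Set.Iio β ∪ eb '' Set.Iio β')).Finite := by
      have : R ∩ (f '' Set.Iio β ∪ eb '' Set.Iio β') ⊆
          (f '' Dif) ∪ (R ∩ eb '' Set.Iio β') := by
        rintro x ⟨hxR, hmem | hmem⟩
        · rcases hfimg hmem with ⟨δ, hδ, rfl⟩ | h2
          · exact Or.inr ⟨hxR, ⟨δ, hδ.trans hββ', rfl⟩⟩
          · exact Or.inl h2
        · exact Or.inr ⟨hxR, hmem⟩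
      exact ((hDiffin.image f).union hR).subset this
    have : R \ (R ∩ (f '' Set.Iio β ∪ eb '' Set.Iio β')) ⊆ W := by
      rintro x ⟨hxR, hx⟩
      exact ⟨hxR, fun h => hx ⟨hxR, h⟩⟩
    exact ((hRinf.diff h1).mono this)
  obtain ⟨i, hi⟩ := Set.countable_iff_exists_injective.mp hSfin.countable
  set emb := hWinf.natEmbedding with hemb
  set v : ↥S → ℕ := fun s => (emb (i s) : ℕ) with hv
  have hvinj : Function.Injective v := fun s t h => hi (emb.injective (Subtype.ext h))
  have hvW : ∀ s, v s ∈ W := fun s => (emb (i s)).2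
  refine ⟨fun γ => if γ < β then f γ else if h : γ ∈ S then v ⟨γ, h⟩ else
    if γ < β' then eb γ else 0, ?_, ?_, ?_, ?_, fun γ hγ => if_pos hγ⟩
  case _ => -- InjOn
    intro γ₁ h₁ γ₂ h₂ he
    simp only [Set.mem_Iio] at h₁ h₂
    simp only at he
    by_cases c1 : γ₁ < β <;> by_cases c2 : γ₂ < β
    · rw [if_pos c1, if_pos c2] at he; exact hinj c1 c2 he
    · rw [if_pos c1, if_neg c2] at he
      exfalso
      by_cases s2 : γ₂ ∈ S
      · rw [dif_pos s2] at he
        exact (hvW ⟨γ₂, s2⟩).2 (Or.inl ⟨γ₁, c1, he⟩)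
      · rw [dif_neg s2, if_pos h₂] at he
        exact s2 ⟨c2, h₂, Or.inl ⟨γ₁, c1, he⟩⟩
    · rw [if_neg c1, if_pos c2] at he
      exfalso
      by_cases s1 : γ₁ ∈ S
      · rw [dif_pos s1] at he
        exact (hvW ⟨γ₁, s1⟩).2 (Or.inl ⟨γ₂, c2, he.symm⟩)
      · rw [dif_neg s1, if_pos h₁] at he
        exact s1 ⟨c1, h₁, Or.inl ⟨γ₂, c2, he.symm⟩⟩
    · rw [if_neg c1, if_neg c2] at he
      by_cases s1 : γ₁ ∈ S <;> by_cases s2 : γ₂ ∈ S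
      · rw [dif_pos s1, dif_pos s2] at he
        exact Subtype.ext_iff.mp (hvinj he)
      · rw [dif_pos s1, dif_neg s2, if_pos h₂] at he
        exact ((hvW ⟨γ₁, s1⟩).2 (Or.inr ⟨γ₂, h₂, he.symm⟩)).elim
      · rw [dif_neg s1, dif_pos s2, if_pos h₁] at he
        exact ((hvW ⟨γ₂, s2⟩).2 (Or.inr ⟨γ₁, h₁, he⟩)).elim
      · rw [dif_neg s1, if_pos h₁, dif_neg s2, if_pos h₂] at he
        exact hebinj h₁ h₂ he
  case _ => -- Supp
    intro γ hγ
    have hγβ : ¬ γ < β := fun h => hγ (h.trans hββ')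
    have hγS : γ ∉ S := fun h => hγ h.2.1
    simp only
    rw [if_neg hγβ, dif_neg hγS, if_neg hγ]
  case _ => -- Coh
    refine (hDiffin.union hSfin).subset ?_
    rintro γ ⟨hγ, hne⟩
    simp only at hne
    by_cases c : γ < β
    · rw [if_pos c] at hne; exact Or.inl ⟨c, hne⟩
    · by_cases s : γ ∈ S
      · exact Or.inr s
      · rw [if_neg c, dif_neg s, if_pos hγ] at hne; exact absurd rfl hne
  case _ => -- disjoint from A
    rw [Set.eq_empty_iff_forall_notMem]
    rintro x ⟨⟨γ, hγ, rfl⟩, hxA⟩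
    simp only [Set.mem_Iio] at hγ
    simp only at hxA
    by_cases c : γ < β
    · rw [if_pos c] at hxA
      exact (Set.eq_empty_iff_forall_notMem.mp hdisj) _ ⟨⟨γ, c, rfl⟩, hxA⟩
    · by_cases s : γ ∈ S
      · rw [if_neg c, dif_pos s] at hxA
        exact Set.disjoint_left.mp hAR hxA (hvW ⟨γ, s⟩).1
      · rw [if_neg c, dif_neg s, if_pos hγ] at hxA
        exact s ⟨c, hγ, Or.inr hxA⟩

lemma Acofinal (α : Ordinal.{0}) (hlim : Order.IsSuccLimit α) (hc : (Set.Iio α).Countable) :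
    ∃ g : ℕ → Ordinal.{0}, StrictMono g ∧ g 0 = 0 ∧ (∀ n, g n < α) ∧
      ∀ β, β < α → ∃ n, β < g n := by
  obtain ⟨h, hh⟩ := hc.exists_eq_range ⟨0, hlim.pos⟩
  classical
  let g : ℕ → Ordinal.{0} := fun n => Nat.rec 0 (fun k gk => Order.succ (max gk (h k))) n
  have hlt : ∀ n, g n < α := by
    intro n
    induction n with
    | zero => exact hlim.pos
    | succ k ih =>
      refine hlim.succ_lt (max_lt ih ?_)
      have : h k ∈ Set.Iio α := by rw [hh]; exact ⟨k, rfl⟩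
      exact this
  have hmono : StrictMono g := by
    refine strictMono_nat_of_lt_succ fun n => ?_
    exact lt_of_le_of_lt (le_max_left _ _) (Order.lt_succ _)
  refine ⟨g, hmono, rfl, hlt, fun β hβ => ?_⟩
  have : β ∈ range h := by rw [← hh]; exact hβ
  obtain ⟨n, rfl⟩ := this
  exact ⟨n + 1, lt_of_le_of_lt (le_max_right _ _) (Order.lt_succ _)⟩

lemma Apseudo (C : ℕ → Set ℕ) (hinf : ∀ n, (C n).Infinite)
    (hal : ∀ m n, m ≤ n → (C n \ C m).Finite) :
    ∃ a : ℕ → ℕ, StrictMono a ∧ ∀ m k, m ≤ k → a k ∈ C m := by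
  classical
  set D : ℕ → Set ℕ := fun k => ⋂ i ∈ Finset.range (k + 1), C i with hD
  have hDsub : ∀ m k, m ≤ k → D k ⊆ C m := by
    intro m k hmk x hx
    simp only [hD, Set.mem_iInter, Finset.mem_range] at hx
    exact hx m (Nat.lt_succ_of_le hmk)
  have hDinf : ∀ k, (D k).Infinite := by
    intro k
    have hsub : C k \ (⋃ i ∈ Finset.range (k+1), (C k \ C i)) ⊆ D k := by
      rintro x ⟨hxk, hxu⟩
      simp only [hD, Set.mem_iInter]
      intro i hi
      by_contra hxi
      exact hxu (Set.mem_biUnion hi ⟨hxk, hxi⟩)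
    refine ((hinf k).diff ?_).mono hsub
    refine Set.Finite.biUnion (Finset.range (k+1)).finite_toSet (fun i hi => ?_)
    simp only [Finset.coe_range, Set.mem_Iio] at hi
    exact hal i k (Nat.lt_succ_iff.mp hi)
  have hnext : ∀ k (b : ℕ), ∃ x, x ∈ D k ∧ b < x := by
    intro k b
    obtain ⟨x, hx1, hx2⟩ := ((hDinf k).diff (Set.finite_Iic b)).nonempty
    exact ⟨x, hx1, by simpa using hx2⟩
  let a : ℕ → ℕ := fun k => Nat.rec (Classical.choose (hnext 0 0))
    (fun k ak => Classical.choose (hnext (k+1) ak)) k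
  have ha0 : a 0 ∈ D 0 := (Classical.choose_spec (hnext 0 0)).1
  have haS : ∀ k, a (k+1) ∈ D (k+1) ∧ a k < a (k+1) :=
    fun k => Classical.choose_spec (hnext (k+1) (a k))
  have haD : ∀ k, a k ∈ D k := by
    intro k
    cases k with
    | zero => exact ha0
    | succ k => exact (haS k).1
  exact ⟨a, strictMono_nat_of_lt_succ (fun n => (haS n).2),
    fun m k hmk => hDsub m k hmk (haD k)⟩

lemma AGood_limit (α : Ordinal.{0}) (hlim : Order.IsSuccLimit α) (hc : (Set.Iio α).Countable)
    (e : Ordinal.{0} → Ordinal.{0} → ℕ)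
    (hg : ∀ β, β < α → AGood β (e β))
    (hco : ∀ β γ, γ < β → β < α → ACoh γ (e β) (e γ)) :
    ∃ f, AGood α f ∧ ∀ β, β < α → ACoh β f (e β) := by
  classical
  obtain ⟨g, hgm, hg0, hglt, hgcof⟩ := Acofinal α hlim hc
  set img : ℕ → Set ℕ := fun n => e (g n) '' Set.Iio (g n) with himg
  have hcof_coh : ∀ m n, m ≤ n → ACoh (g m) (e (g n)) (e (g m)) := by
    intro m n hmn
    rcases eq_or_lt_of_le hmn with rfl | h
    · exact Set.Finite.subset (Set.finite_empty) (by rintro γ ⟨_, h2⟩; exact h2 rfl)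
    · exact hco (g n) (g m) (hgm h) (hglt n)
  have hal : ∀ m n, m ≤ n → ((img n)ᶜ \ (img m)ᶜ).Finite := by
    intro m n hmn
    have heq : (img n)ᶜ \ (img m)ᶜ ⊆ img m \ img n := by
      intro x ⟨h1, h2⟩; exact ⟨not_not.mp h2, h1⟩
    refine Set.Finite.subset ?_ heq
    have : img m \ img n ⊆ e (g m) '' {γ | γ < g m ∧ e (g n) γ ≠ e (g m) γ} := by
      rintro x ⟨⟨γ, hγ, rfl⟩, hn⟩
      refine ⟨γ, ⟨hγ, fun he => hn ⟨γ, hγ.trans_le (hgm.monotone hmn), he⟩⟩, rfl⟩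
    exact ((hcof_coh m n hmn).image _).subset this
  obtain ⟨a, ham, haC⟩ := Apseudo (fun n => (img n)ᶜ) (fun n => (hg _ (hglt n)).2.1) hal
  set A : Set ℕ := Set.range (fun k => a (2*k)) with hA
  set R : Set ℕ := Set.range (fun k => a (2*k+1)) with hR
  have hAR : Disjoint A R := by
    rw [Set.disjoint_left]
    rintro x ⟨k, rfl⟩ ⟨j, hj⟩
    have := ham.injective hj
    omega
  have hRinf : R.Infinite :=
    Set.infinite_range_of_injective (fun j k h => by have := ham.injective h; omega)
  have hAinf : A.Infinite :=
    Set.infinite_range_of_injective (fun j k h => by have := ham.injective h; omega)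
  have hAimg : ∀ n, (A ∩ img n).Finite := by
    intro n
    refine (Set.finite_Iio n |>.image (fun k => a (2*k))).subset ?_
    rintro x ⟨⟨k, rfl⟩, hximg⟩
    refine ⟨k, ?_, rfl⟩
    by_contra hk
    simp only [Set.mem_Iio, not_lt] at hk
    exact haC n (2*k) (by omega) hximg
  have hRimg : ∀ n, (R ∩ img n).Finite := by
    intro n
    refine (Set.finite_Iio n |>.image (fun k => a (2*k+1))).subset ?_
    rintro x ⟨⟨k, rfl⟩, hximg⟩
    refine ⟨k, ?_, rfl⟩
    by_contra hk
    simp only [Set.mem_Iio, not_lt] at hk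
    exact haC n (2*k+1) (by omega) hximg
  set Inv : ℕ → (Ordinal.{0} → ℕ) → Prop := fun n f =>
    Set.InjOn f (Set.Iio (g n)) ∧ ASupp (g n) f ∧ ACoh (g n) f (e (g n)) ∧
      (f '' Set.Iio (g n)) ∩ A = ∅ with hInv
  have base : Inv 0 (fun _ => 0) := by
    rw [hInv]
    have h0 : Set.Iio (g 0) = (∅ : Set Ordinal.{0}) := by
      rw [hg0]; ext x; simp [not_lt_zero]
    refine ⟨by rw [h0]; exact fun x hx => absurd hx (Set.notMem_empty x),
      fun γ _ => rfl, ?_, by rw [h0, Set.image_empty, Set.empty_inter]⟩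
    refine Set.Finite.subset Set.finite_empty ?_
    rw [hg0]; rintro γ ⟨h1, _⟩; exact absurd h1 (not_lt_zero : ¬ γ < 0)
  have step : ∀ n f, Inv n f → ∃ f', Inv (n+1) f' ∧ ∀ γ, γ < g n → f' γ = f γ := by
    intro n f hf
    obtain ⟨hinj, hsupp, hcoh, hdisj⟩ := hf
    have hcoh' : ACoh (g n) f (e (g (n+1))) :=
      hcoh.trans (hcof_coh n (n+1) (by omega)).symm
    obtain ⟨f', h1, h2, h3, h4, h5⟩ := AStep (g n) (g (n+1)) (hgm (by omega))
      (e (g (n+1))) (hg _ (hglt (n+1))).1 A R hAR hRinf (hAimg (n+1)) (hRimg (n+1))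
      f hinj hsupp hcoh' hdisj
    exact ⟨f', ⟨h1, h2, h3, h4⟩, h5⟩
  let F : ∀ n, {f : Ordinal.{0} → ℕ // Inv n f} := fun n =>
    Nat.rec ⟨fun _ => 0, base⟩
      (fun n p => ⟨Classical.choose (step n p.1 p.2),
        (Classical.choose_spec (step n p.1 p.2)).1⟩) n
  have hagree1 : ∀ n γ, γ < g n → (F (n+1)).1 γ = (F n).1 γ :=
    fun n => (Classical.choose_spec (step n (F n).1 (F n).2)).2
  have hagree : ∀ m n, m ≤ n → ∀ γ, γ < g m → (F n).1 γ = (F m).1 γ := by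
    intro m n
    induction n with
    | zero => intro h γ _; rw [Nat.le_zero.mp h]
    | succ k ih =>
      intro h γ hγ
      by_cases hmk : m ≤ k
      · rw [hagree1 k γ (hγ.trans_le (hgm.monotone hmk)), ih hmk γ hγ]
      · have hm : m = k + 1 := by omega
        subst hm; rfl
  set fL : Ordinal.{0} → ℕ := fun γ =>
    if h : ∃ n, γ < g n then (F (Nat.find h)).1 γ else 0 with hfL
  have hfval : ∀ n γ, γ < g n → fL γ = (F n).1 γ := by
    intro n γ hγ
    have hex : ∃ n, γ < g n := ⟨n, hγ⟩
    rw [hfL]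
    simp only [dif_pos hex]
    rcases le_total (Nat.find hex) n with h | h
    · exact (hagree _ n h γ (Nat.find_spec hex)).symm
    · exact hagree n _ h γ hγ
  refine ⟨fL, ⟨?_, ?_, ?_⟩, ?_⟩
  · -- InjOn
    intro γ₁ h₁ γ₂ h₂ he
    obtain ⟨n₁, hn₁⟩ := hgcof γ₁ h₁
    obtain ⟨n₂, hn₂⟩ := hgcof γ₂ h₂
    have k₁ : γ₁ < g (max n₁ n₂) := hn₁.trans_le (hgm.monotone (le_max_left _ _))
    have k₂ : γ₂ < g (max n₁ n₂) := hn₂.trans_le (hgm.monotone (le_max_right _ _))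
    rw [hfval _ _ k₁, hfval _ _ k₂] at he
    exact (F (max n₁ n₂)).2.1 k₁ k₂ he
  · -- coinfinite
    refine hAinf.mono ?_
    intro x hxA
    simp only [Set.mem_compl_iff]
    rintro ⟨γ, hγ, rfl⟩
    obtain ⟨n, hn⟩ := hgcof γ hγ
    have := hfval n γ hn
    have hmem : fL γ ∈ ((F n).1 '' Set.Iio (g n)) ∩ A := by
      rw [this]; exact ⟨⟨γ, hn, rfl⟩, by rw [← this]; exact hxA⟩
    rw [(F n).2.2.2.2] at hmem
    exact hmem
  · -- supp
    intro γ hγ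
    rw [hfL]
    refine dif_neg ?_
    rintro ⟨n, hn⟩
    exact hγ (hn.trans (hglt n))
  · -- coherence
    intro β hβ
    obtain ⟨n, hn⟩ := hgcof β hβ
    refine (((F n).2.2.2.1).union (hco (g n) β hn (hglt n))).subset ?_
    rintro γ ⟨hγ, hne⟩
    rw [hfval n γ (hγ.trans hn)] at hne
    by_cases h : (F n).1 γ = e (g n) γ
    · exact Or.inr ⟨hγ, fun he => hne (h.trans he)⟩
    · exact Or.inl ⟨hγ.trans hn, h⟩

noncomputable def AE : Ordinal.{0} → Ordinal.{0} → ℕ :=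
  Ordinal.lt_wf.fix fun α IH =>
    Classical.epsilon fun f => AGood α f ∧ ∀ β, ∀ h : β < α, ACoh β f (IH β h)

lemma AE_def (α : Ordinal.{0}) :
    AE α = Classical.epsilon fun f => AGood α f ∧ ∀ β, β < α → ACoh β f (AE β) := by
  rw [AE, WellFounded.fix_eq]

lemma AIio_countable (o : Ordinal.{0}) (h : o < (aleph 1).ord) : (Set.Iio o).Countable := by
  rw [lt_ord, ← succ_aleph0, Order.lt_succ_iff] at h
  rw [← Set.countable_coe_iff, ← Cardinal.mk_le_aleph0_iff, Ordinal.mk_Iio_ordinal,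
    Cardinal.lift_le_aleph0]
  exact h

theorem AE_spec : ∀ α : Ordinal.{0}, α < (aleph 1).ord →
    AGood α (AE α) ∧ ∀ β, β < α → ACoh β (AE α) (AE β) := by
  intro α
  induction α using Ordinal.induction with
  | h α IH =>
  intro hα
  have hex : ∃ f, AGood α f ∧ ∀ β, β < α → ACoh β f (AE β) := by
    rcases Ordinal.zero_or_succ_or_isSuccLimit α with rfl | ⟨β, rfl⟩ | hlim
    · exact ⟨fun _ => 0, AGood_zero, fun β hβ => absurd hβ (not_lt_zero : ¬ β < 0)⟩
    · have hβs : β < Order.succ β := Order.lt_succ β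
      obtain ⟨f', hf', hagree⟩ := AGood_succ β (AE β) (IH β hβs (hβs.trans hα)).1
      refine ⟨f', hf', fun δ hδ => ?_⟩
      rcases eq_or_lt_of_le (Order.lt_succ_iff.mp hδ) with rfl | hδβ
      · refine Set.Finite.subset Set.finite_empty ?_
        rintro γ ⟨h1, h2⟩
        exact h2 (hagree γ h1)
      · refine ((IH β hβs (hβs.trans hα)).2 δ hδβ).subset ?_
        rintro γ ⟨h1, h2⟩
        exact ⟨h1, fun he => h2 ((hagree γ (h1.trans hδβ)).trans he)⟩
    · exact AGood_limit α hlim (AIio_countable α hα) AE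
        (fun β hβ => (IH β hβ (hβ.trans hα)).1)
        (fun β γ hγβ hβα => (IH β hβα (hβα.trans hα)).2 γ hγβ)
  rw [AE_def]
  exact Classical.epsilon_spec hex

noncomputable section

abbrev OT : Type 0 := ((aleph 1).ord : Ordinal.{0}).ToType

def aiso : (Set.Iio ((aleph 1).ord : Ordinal.{0})) ≃o OT := Ordinal.ToType.mk

def aord (x : OT) : Ordinal.{0} := (aiso.symm x).val

lemma aord_lt (x : OT) : aord x < (aleph 1).ord := (aiso.symm x).2

lemma aord_inj : Function.Injective aord := fun x y h =>
  aiso.symm.injective (Subtype.ext h)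

lemma aord_iso (α : Ordinal.{0}) (h : α < (aleph 1).ord) : aord (aiso ⟨α, h⟩) = α := by
  show ((aiso.symm) (aiso ⟨α, h⟩)).val = α
  rw [OrderIso.symm_apply_apply]

lemma aiso_aord (x : OT) : aiso ⟨aord x, aord_lt x⟩ = x := by
  have h : (⟨aord x, aord_lt x⟩ : Set.Iio ((aleph 1).ord : Ordinal.{0})) = aiso.symm x := rfl
  rw [h, OrderIso.apply_symm_apply]

/-- decode a pair into a function on ordinals -/
def adec (p : OT × (OT → ℕ)) : Ordinal.{0} → ℕ :=
  fun γ => if h : γ < (aleph 1).ord then p.2 (aiso ⟨γ, h⟩) else 0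

lemma adec_aord (p : OT × (OT → ℕ)) (y : OT) : adec p (aord y) = p.2 y := by
  rw [adec]
  simp only [dif_pos (aord_lt y)]
  rw [aiso_aord]

def ACond (p : OT × (OT → ℕ)) : Prop :=
  Set.InjOn (adec p) (Set.Iio (aord p.1)) ∧ ASupp (aord p.1) (adec p) ∧
    ACoh (aord p.1) (adec p) (AE (aord p.1))

def ANode : Type 0 := {p : OT × (OT → ℕ) // ACond p}

instance : PartialOrder ANode where
  le a b := aord a.1.1 ≤ aord b.1.1 ∧ ∀ γ, γ < aord a.1.1 → adec a.1 γ = adec b.1 γ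
  le_refl a := ⟨le_refl _, fun _ _ => rfl⟩
  le_trans a b c hab hbc := ⟨hab.1.trans hbc.1,
    fun γ hγ => (hab.2 γ hγ).trans (hbc.2 γ (hγ.trans_le hab.1))⟩
  le_antisymm a b hab hba := by
    have hord : aord a.1.1 = aord b.1.1 := le_antisymm hab.1 hba.1
    have hdec : adec a.1 = adec b.1 := by
      funext γ
      by_cases h : γ < aord a.1.1
      · exact hab.2 γ h
      · rw [a.2.2.1 γ h, b.2.2.1 γ (hord ▸ h)]
    have h1 : a.1.1 = b.1.1 := aord_inj hord
    have h2 : a.1.2 = b.1.2 := by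
      funext y
      rw [← adec_aord a.1 y, ← adec_aord b.1 y, hdec]
    exact Subtype.ext (Prod.ext h1 h2)

def alev (t : ANode) : Ordinal.{0} := aord t.1.1

lemma ale_def {a b : ANode} : a ≤ b ↔
    alev a ≤ alev b ∧ ∀ γ, γ < alev a → adec a.1 γ = adec b.1 γ := Iff.rfl

lemma anode_ext {a b : ANode} (h1 : alev a = alev b) (h2 : adec a.1 = adec b.1) : a = b :=
  le_antisymm (ale_def.mpr ⟨h1.le, fun γ _ => by rw [h2]⟩)
    (ale_def.mpr ⟨h1.ge, fun γ _ => by rw [h2]⟩)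

/-- construct a node from level and function -/
lemma mkNode (α : Ordinal.{0}) (hα : α < (aleph 1).ord) (f : Ordinal.{0} → ℕ)
    (hinj : Set.InjOn f (Set.Iio α)) (hsupp : ASupp α f) (hcoh : ACoh α f (AE α)) :
    ∃ t : ANode, alev t = α ∧ adec t.1 = f := by
  have hlev : aord (aiso ⟨α, hα⟩, fun y => f (aord y)).1 = α := aord_iso α hα
  have hdec : adec (aiso ⟨α, hα⟩, fun y => f (aord y)) = f := by
    funext γ
    by_cases h : γ < (aleph 1).ord
    · simp only [adec, dif_pos h]
      show f (aord (aiso ⟨γ, h⟩)) = f γ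
      rw [aord_iso γ h]
    · simp only [adec, dif_neg h]
      exact (hsupp γ (fun hlt => h (hlt.trans hα))).symm
  refine ⟨⟨(aiso ⟨α, hα⟩, fun y => f (aord y)), ?_⟩, hlev, hdec⟩
  rw [ACond, hlev, hdec]
  exact ⟨hinj, hsupp, hcoh⟩

lemma alev_lt (t : ANode) : alev t < (aleph 1).ord := aord_lt _

lemma anode_cond (t : ANode) : Set.InjOn (adec t.1) (Set.Iio (alev t)) ∧
    ASupp (alev t) (adec t.1) ∧ ACoh (alev t) (adec t.1) (AE (alev t)) := t.2

lemma omega1_uncountable : ¬ (Set.Iio ((aleph 1).ord : Ordinal.{0})).Countable := by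
  intro h
  have h1 : #(↥(Set.Iio ((aleph 1).ord : Ordinal.{0}))) ≤ ℵ₀ :=
    Cardinal.mk_le_aleph0_iff.mpr h.to_subtype
  rw [Ordinal.mk_Iio_ordinal, card_ord, Cardinal.lift_le_aleph0] at h1
  exact aleph0_lt_aleph_one.not_ge h1

lemma alev_strictMono {a b : ANode} (h : a < b) : alev a < alev b := by
  obtain ⟨hle, hnle⟩ := lt_iff_le_not_ge.mp h
  rcases lt_or_eq_of_le (ale_def.mp hle).1 with h1 | h1
  · exact h1
  · exact absurd (ale_def.mpr ⟨h1.ge, fun γ hγ => ((ale_def.mp hle).2 γ (h1 ▸ hγ)).symm⟩) hnle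

lemma apred_chain (t s₁ s₂ : ANode) (h₁ : s₁ < t) (h₂ : s₂ < t) : s₁ ≤ s₂ ∨ s₂ ≤ s₁ := by
  obtain ⟨hle₁, -⟩ := lt_iff_le_not_ge.mp h₁
  obtain ⟨hle₂, -⟩ := lt_iff_le_not_ge.mp h₂
  rcases le_total (alev s₁) (alev s₂) with h | h
  · exact Or.inl (ale_def.mpr ⟨h, fun γ hγ =>
      ((ale_def.mp hle₁).2 γ hγ).trans ((ale_def.mp hle₂).2 γ (hγ.trans_le h)).symm⟩)
  · exact Or.inr (ale_def.mpr ⟨h, fun γ hγ =>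
      ((ale_def.mp hle₂).2 γ hγ).trans ((ale_def.mp hle₁).2 γ (hγ.trans_le h)).symm⟩)

lemma apred_full (t : ANode) (α : Ordinal.{0}) (hα : α < alev t) :
    ∃ s, s < t ∧ alev s = α := by
  classical
  have hβ := alev_lt t
  have hα1 : α < (aleph 1).ord := hα.trans hβ
  obtain ⟨hinj, hsupp, hcoh⟩ := anode_cond t
  obtain ⟨s, hs1, hs2⟩ := mkNode α hα1 (fun γ => if γ < α then adec t.1 γ else 0)
    (fun γ₁ hγ₁ γ₂ hγ₂ he => by
      simp only at he
      rw [if_pos (Set.mem_Iio.mp hγ₁), if_pos (Set.mem_Iio.mp hγ₂)] at he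
      exact hinj (Set.mem_Iio.mpr (hγ₁.trans hα)) (Set.mem_Iio.mpr (hγ₂.trans hα)) he)
    (fun γ hγ => if_neg hγ)
    (by
      refine (hcoh.union ((AE_spec (alev t) hβ).2 α hα)).subset ?_
      rintro γ ⟨hγ, hne⟩
      simp only at hne
      rw [if_pos hγ] at hne
      by_cases h : adec t.1 γ = AE (alev t) γ
      · exact Or.inr ⟨hγ, fun he => hne (h.trans he)⟩
      · exact Or.inl ⟨hγ.trans hα, h⟩)
  refine ⟨s, lt_iff_le_not_ge.mpr ⟨?_, ?_⟩, hs1⟩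
  · refine ale_def.mpr ⟨by rw [hs1]; exact hα.le, fun γ hγ => ?_⟩
    rw [hs2]
    simp only
    rw [if_pos (hs1 ▸ hγ)]
  · intro hle
    exact absurd ((ale_def.mp hle).1.trans_lt (hs1 ▸ hα)) (lt_irrefl _)

lemma alevels_nonempty (α : Ordinal.{0}) (hα : α < (aleph 1).ord) :
    ∃ t : ANode, alev t = α := by
  obtain ⟨⟨h1, h2, h3⟩, -⟩ := AE_spec α hα
  obtain ⟨t, ht, -⟩ := mkNode α hα (AE α) h1 h3
    (Set.Finite.subset Set.finite_empty (by rintro γ ⟨-, h⟩; exact h rfl))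
  exact ⟨t, ht⟩

lemma alevels_small (α : Ordinal.{0}) : #{t : ANode // alev t = α} ≤ ℵ₀ := by
  classical
  rw [Cardinal.mk_le_aleph0_iff]
  by_cases hα : α < (aleph 1).ord
  · haveI : Countable (↥(Set.Iio α)) := (AIio_countable α hα).to_subtype
    set D : {t : ANode // alev t = α} → Set (↥(Set.Iio α) × ℕ) := fun t =>
      {q | adec t.1.1 q.1.val ≠ AE α q.1.val ∧ q.2 = adec t.1.1 q.1.val} with hD
    have hDfin : ∀ t, (D t).Finite := by
      intro t
      have hcoh : ACoh α (adec t.1.1) (AE α) := by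
        have := (anode_cond t.1).2.2
        rwa [t.2] at this
      refine Set.Finite.of_finite_image (f := fun q => q.1.val) (hcoh.subset ?_) ?_
      · rintro γ ⟨⟨⟨γ', hγ'⟩, m⟩, ⟨hq1, -⟩, rfl⟩
        exact ⟨hγ', hq1⟩
      · rintro ⟨⟨γ₁, h₁⟩, m₁⟩ hq₁ ⟨⟨γ₂, h₂⟩, m₂⟩ hq₂ he
        simp only at he
        subst he
        exact Prod.ext (Subtype.ext rfl) (hq₁.2.trans hq₂.2.symm)
    refine Function.Injective.countable (f := fun t => (hDfin t).toFinset) ?_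
    intro t₁ t₂ he
    rw [Set.Finite.toFinset_inj] at he
    have hdec : adec t₁.1.1 = adec t₂.1.1 := by
      funext γ
      by_cases hγα : γ < α
      · by_cases h1 : adec t₁.1.1 γ = AE α γ
        · by_cases h2 : adec t₂.1.1 γ = AE α γ
          · rw [h1, h2]
          · have hmem : (⟨⟨γ, hγα⟩, adec t₂.1.1 γ⟩ : ↥(Set.Iio α) × ℕ) ∈ D t₂ := ⟨h2, rfl⟩
            rw [← he] at hmem
            exact absurd h1 hmem.1
        · have hmem : (⟨⟨γ, hγα⟩, adec t₁.1.1 γ⟩ : ↥(Set.Iio α) × ℕ) ∈ D t₁ := ⟨h1, rfl⟩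
          rw [he] at hmem
          exact hmem.2
      · rw [(anode_cond t₁.1).2.1 γ (by rw [t₁.2]; exact hγα),
          (anode_cond t₂.1).2.1 γ (by rw [t₂.2]; exact hγα)]
    exact Subtype.ext (anode_ext (t₁.2.trans t₂.2.symm) hdec)
  · haveI : IsEmpty {t : ANode // alev t = α} :=
      ⟨fun t => hα (t.2 ▸ alev_lt t.1)⟩
    infer_instance

lemma achain_agree (B : Set ANode) (hB : IsChain (· ≤ ·) B) (u v : ANode)
    (hu : u ∈ B) (hv : v ∈ B) (γ : Ordinal.{0}) (hγu : γ < alev u) (hγv : γ < alev v) :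
    adec u.1 γ = adec v.1 γ := by
  rcases eq_or_ne u v with rfl | hne
  · rfl
  · rcases hB.total hu hv with h | h
    · exact (ale_def.mp h).2 γ hγu
    · exact ((ale_def.mp h).2 γ hγv).symm

lemma achain_countable (B : Set ANode) (hB : IsChain (· ≤ ·) B) : #B ≤ ℵ₀ := by
  classical
  rw [Cardinal.mk_le_aleph0_iff, Set.countable_coe_iff]
  by_contra hc
  have hlim : Order.IsSuccLimit ((aleph 1).ord : Ordinal.{0}) := Cardinal.isSuccLimit_ord (aleph0_le_aleph 1)
  have hlevinj : Set.InjOn alev B := by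
    intro t₁ h₁ t₂ h₂ he
    rcases eq_or_ne t₁ t₂ with h | hne
    · exact h
    · rcases hB.total h₁ h₂ with h | h
      · exact le_antisymm h (ale_def.mpr ⟨he.ge, fun γ hγ => ((ale_def.mp h).2 γ (he ▸ hγ)).symm⟩)
      · exact (le_antisymm h (ale_def.mpr ⟨he.le, fun γ hγ =>
          ((ale_def.mp h).2 γ (he ▸ hγ)).symm⟩)).symm
  have hunb : ∀ γ, γ < (aleph 1).ord → ∃ t, t ∈ B ∧ γ < alev t := by
    by_contra h
    push_neg at h
    obtain ⟨γ, hγ, hbound⟩ := h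
    apply hc
    have hsucc : Order.succ γ < (aleph 1).ord := hlim.succ_lt hγ
    haveI : Countable (↥(Set.Iio (Order.succ γ))) := (AIio_countable _ hsucc).to_subtype
    refine Set.countable_coe_iff.mp (Function.Injective.countable
      (f := fun t : ↥B => (⟨alev t.1, ?_⟩ : ↥(Set.Iio (Order.succ γ)))) ?_)
    · exact Set.mem_Iio.mpr (Order.lt_succ_iff.mpr (hbound t.1 t.2))
    · intro t₁ t₂ he
      simp only [Subtype.mk.injEq] at he
      exact Subtype.ext (hlevinj t₁.2 t₂.2 he)
  -- build an injection of Iio ω₁ into ℕ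
  have hpick : ∀ γ : ↥(Set.Iio ((aleph 1).ord : Ordinal.{0})),
      ∃ t, t ∈ B ∧ γ.val < alev t := fun γ => hunb γ.val γ.2
  set pick : ∀ γ : ↥(Set.Iio ((aleph 1).ord : Ordinal.{0})), ANode :=
    fun γ => Classical.choose (hpick γ) with hpickdef
  have hpick1 : ∀ γ, pick γ ∈ B := fun γ => (Classical.choose_spec (hpick γ)).1
  have hpick2 : ∀ γ, γ.val < alev (pick γ) := fun γ => (Classical.choose_spec (hpick γ)).2
  have hinj : Function.Injective (fun γ => adec (pick γ).1 γ.val) := by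
    intro γ₁ γ₂ he
    simp only at he
    rcases le_total (alev (pick γ₁)) (alev (pick γ₂)) with h | h
    · rw [achain_agree B hB (pick γ₁) (pick γ₂) (hpick1 γ₁) (hpick1 γ₂) γ₁.val
        (hpick2 γ₁) ((hpick2 γ₁).trans_le h)] at he
      exact Subtype.ext ((anode_cond (pick γ₂)).1 (Set.mem_Iio.mpr ((hpick2 γ₁).trans_le h))
        (Set.mem_Iio.mpr (hpick2 γ₂)) he)
    · rw [achain_agree B hB (pick γ₂) (pick γ₁) (hpick1 γ₂) (hpick1 γ₁) γ₂.val
        (hpick2 γ₂) ((hpick2 γ₂).trans_le h)] at he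
      exact Subtype.ext ((anode_cond (pick γ₁)).1 (Set.mem_Iio.mpr (hpick2 γ₁))
        (Set.mem_Iio.mpr ((hpick2 γ₂).trans_le h)) he)
  exact omega1_uncountable (Set.countable_coe_iff.mp (Function.Injective.countable hinj))

lemma ano_branch : ¬ HasCofinalBranch (aleph 1) ANode alev := by
  rintro ⟨B, hchain, hmeets⟩
  have hcard := achain_countable B hchain
  have hBc : B.Countable := by
    rwa [Cardinal.mk_le_aleph0_iff, Set.countable_coe_iff] at hcard
  apply omega1_uncountable
  refine Set.Countable.mono ?_ (hBc.image alev)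
  intro γ hγ
  obtain ⟨t, htB, htl⟩ := hmeets γ hγ
  exact ⟨t, htB, htl⟩

/-- ω₁ does not have the tree property: there is an Aronszajn ω₁-tree, i.e. a tree of
height ω₁ all of whose levels are countable which has no uncountable branch. -/
theorem stmt1 :
    ∃ (T : Type 0) (_ : PartialOrder T) (lev : T → Ordinal.{0}),
      IsDeltaTree (aleph 1) T lev ∧
      (∀ α, #{t : T // lev t = α} ≤ ℵ₀) ∧
      (∀ B : Set T, IsChain (· ≤ ·) B → #B ≤ ℵ₀) ∧
      ¬ HasCofinalBranch (aleph 1) T lev := by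
  refine ⟨ANode, inferInstance, alev, ⟨⟨@alev_strictMono, apred_chain, apred_full⟩,
    alev_lt, alevels_nonempty, fun α => (alevels_small α).trans_lt aleph0_lt_aleph_one⟩,
    alevels_small, achain_countable, ano_branch⟩

end
end AronszajnConstruction
end

section
/- Let σ : H → H̃ be a countably complete elementary embedding between structures in a countable relational language, where H is a transitive structure (with ∈ as a distinguished relation). Then the membership relation E of H̃ is well-founded. -/
/-!
A descending `E`-chain in `H̃` lies in a countable elementary substructure of `H̃`
(downward Löwenheim–Skolem). Countable completeness of `σ` embeds that substructure
elementarily into `H`, where the image of the chain would again descend, contradicting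
well-foundedness in `H`.
-/

open FirstOrder Cardinal

/-- `σ : M → N` is `κ`-complete: for every elementary `τ : P → N` with `|P| < κ` there is
an elementary `π : P → M` with `σ (π x) = τ x` whenever `τ x ∈ ran σ`. -/
def IsCompleteEmbedding (L : FirstOrder.Language) {M N : Type} [L.Structure M] [L.Structure N]
    (κ : Cardinal.{0}) (σ : M ↪ₑ[L] N) : Prop :=
  ∀ (P : Type) (_ : L.Structure P) (τ : P ↪ₑ[L] N), #P < κ →
    ∃ π : P ↪ₑ[L] M, ∀ x : P, (∃ y, σ y = τ x) → σ (π x) = τ x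

namespace FirstOrder.Language

open Structure

variable {L : Language} {M N F : Type*} [L.Structure M] [L.Structure N] [FunLike F M N]

theorem HomClass.relMap_pair [L.HomClass F M N] (φ : F) {r : L.Relations 2} {a b : M}
    (h : RelMap r ![a, b]) : RelMap r ![φ a, φ b] := by
  have h' := HomClass.map_rel φ r ![a, b] h
  rwa [← FinVec.map_eq] at h'

theorem StrongHomClass.relMap_pair_iff [L.StrongHomClass F M N] (φ : F) {r : L.Relations 2}
    {a b : M} : RelMap r ![φ a, φ b] ↔ RelMap r ![a, b] := by
  have h := StrongHomClass.map_rel φ r ![a, b]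
  rwa [← FinVec.map_eq] at h

theorem HomClass.wellFounded_relMap_pair [L.HomClass F M N] (φ : F) (r : L.Relations 2)
    (h : WellFounded fun a b : N => RelMap r ![a, b]) :
    WellFounded fun a b : M => RelMap r ![a, b] :=
  RelHomClass.wellFounded
    (⟨φ, HomClass.relMap_pair φ⟩ : (fun a b : M => RelMap r ![a, b]) →r _) h

theorem exists_countable_elementarySubstructure [Countable L.Symbols] {s : Set M}
    (hs : s.Countable) : ∃ S : L.ElementarySubstructure M, s ⊆ S ∧ Countable S := by
  rcases le_or_gt #M ℵ₀ with hM | hM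
  · exact ⟨⊤, fun x _ => ElementarySubstructure.mem_top x,
      mk_le_aleph0_iff.1 ((mk_subtype_le _).trans hM)⟩
  · obtain ⟨S, hsS, hS⟩ := exists_elementarySubstructure_card_eq L s (ℵ₀ : Cardinal.{0}) le_rfl
      (by simpa using hs.le_aleph0) (by rw [lift_aleph0, lift_le_aleph0]; exact mk_le_aleph0)
      (by simpa using hM.le)
    exact ⟨S, hsS, mk_le_aleph0_iff.1 (lift_eq_aleph0.1 (hS.trans lift_aleph0)).le⟩

theorem wellFounded_relMap_pair_of_forall_countable_elementarySubstructure
    [Countable L.Symbols] (r : L.Relations 2)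
    (h : ∀ S : L.ElementarySubstructure M, Countable S →
      WellFounded fun a b : S => RelMap r ![a, b]) :
    WellFounded fun a b : M => RelMap r ![a, b] := by
  refine wellFounded_iff_isEmpty_descending_chain.2 ⟨fun ⟨f, hf⟩ => ?_⟩
  obtain ⟨S, hfS, hS⟩ := exists_countable_elementarySubstructure (L := L) (Set.countable_range f)
  refine (wellFounded_iff_isEmpty_descending_chain.1 (h S hS)).false
    ⟨fun n => ⟨f n, hfS (Set.mem_range_self n)⟩, fun n => ?_⟩
  exact (StrongHomClass.relMap_pair_iff S.subtype).1 (hf n)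

end FirstOrder.Language

/-- If `H` is a (transitive, hence well-founded) structure in a countable relational
language with a distinguished membership relation `E`, and `σ : H → H̃` is a countably
complete elementary embedding, then the interpretation of `E` in `H̃` is well-founded. -/
theorem stmt4 (L : FirstOrder.Language) [∀ n, IsEmpty (L.Functions n)]
    [Countable (Σ n, L.Relations n)] (E : L.Relations 2)
    (H Ht : Type) [L.Structure H] [L.Structure Ht]
    (hwf : WellFounded fun a b : H => Language.Structure.RelMap E ![a, b])
    (σ : H ↪ₑ[L] Ht) (hσ : IsCompleteEmbedding L (Cardinal.aleph 1) σ) :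
    WellFounded fun a b : Ht => Language.Structure.RelMap E ![a, b] := by
  have : Countable L.Symbols := by unfold Language.Symbols; infer_instance
  refine Language.wellFounded_relMap_pair_of_forall_countable_elementarySubstructure E
    fun S hS => ?_
  obtain ⟨π, -⟩ := hσ S inferInstance S.subtype (mk_le_aleph0.trans_lt aleph0_lt_aleph_one)
  exact Language.HomClass.wellFounded_relMap_pair π E hwf
end
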